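/- arXiv:1512.08135 — 2 statements merged into one kernel-verified Lean document; each statement's English description precedes it below -/
import Mathlib

section
/- The kernel polynomial minimizer ρ̂_k(t) = (Σ_{j=0}^k T̂ⱼ(γ)T̂ⱼ(t)) / (Σ_{j=0}^k T̂ⱼ(γ)²) is the unique polynomial of degree at most k with ρ̂_k(γ) = 1 that minimizes the Chebyshev L²-norm ‖r‖_w over all polynomials r of degree ≤ k with r(γ) = 1. -/
open Real Polynomial Finset

noncomputable def ThatP (j : ℕ) : Polynomial ℝ :=
  if j = 0 then Polynomial.C (Real.sqrt Real.pi)⁻¹ * Polynomial.Chebyshev.T ℝ (j : ℤ)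
  else Polynomial.C (Real.sqrt (Real.pi / 2))⁻¹ * Polynomial.Chebyshev.T ℝ (j : ℤ)

noncomputable def chebNorm (p : Polynomial ℝ) : ℝ :=
  Real.sqrt (∫ t in (-1:ℝ)..1, (p.eval t) ^ 2 / Real.sqrt (1 - t ^ 2))

noncomputable def rhoHat (k : ℕ) (γ : ℝ) : Polynomial ℝ :=
  Polynomial.C (∑ j ∈ Finset.range (k + 1), (ThatP j).eval γ ^ 2)⁻¹ *
    ∑ j ∈ Finset.range (k + 1), Polynomial.C ((ThatP j).eval γ) * ThatP j

/-! In the orthonormal basis `T̂₀, …, T̂ₖ` of the polynomials of degree `≤ k`, a polynomial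
`r = ∑ cⱼ T̂ⱼ` has `‖r‖_w² = ∑ cⱼ²`, and `r(γ) = 1` becomes the linear constraint `∑ cⱼ aⱼ = 1`
with `aⱼ = T̂ⱼ(γ)`. For `S = ∑ aⱼ²` this constraint gives the Pythagorean identity
`∑ cⱼ² = ∑ (aⱼ/S)² + ∑ (cⱼ - aⱼ/S)²`, so the coefficients `aⱼ/S` of `ρ̂_k` are the unique
minimizer. -/

open Polynomial.Chebyshev MeasureTheory

section OrthonormalExpansion

variable {α ι : Type*} [MeasurableSpace α] [DecidableEq ι] {μ : Measure α} {φ : ι → α → ℝ}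

theorem integral_sum_mul_sq_of_orthonormal (hint : ∀ i j, Integrable (fun x => φ i x * φ j x) μ)
    (hφ : ∀ i j, ∫ x, φ i x * φ j x ∂μ = if i = j then 1 else 0) (s : Finset ι) (c : ι → ℝ) :
    ∫ x, (∑ i ∈ s, c i * φ i x) ^ 2 ∂μ = ∑ i ∈ s, c i ^ 2 := by
  have hx : ∀ i j x, c i * φ i x * (c j * φ j x) = c i * c j * (φ i x * φ j x) :=
    fun i j x => by ring
  have hint' : ∀ i j, Integrable (fun x => c i * φ i x * (c j * φ j x)) μ :=
    fun i j => by simpa only [hx] using (hint i j).const_mul (c i * c j)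
  have hterm : ∀ i j, ∫ x, c i * φ i x * (c j * φ j x) ∂μ = if i = j then c i * c j else 0 := by
    intro i j
    simp_rw [hx, integral_const_mul, hφ]
    split_ifs <;> simp
  simp_rw [sq, Finset.sum_mul_sum]
  rw [integral_finsetSum _ fun i _ => integrable_finsetSum _ fun j _ => hint' i j]
  refine Finset.sum_congr rfl fun i hi => ?_
  rw [integral_finsetSum _ fun j _ => hint' i j]
  simp_rw [hterm, Finset.sum_ite_eq, if_pos hi]

end OrthonormalExpansion

section ConstrainedLeastSquares

variable {ι : Type*} {s : Finset ι} {a c : ι → ℝ} {S : ℝ}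

theorem sum_div_mul_self_eq_one (hS : ∑ i ∈ s, a i ^ 2 = S) (hS0 : S ≠ 0) :
    ∑ i ∈ s, a i / S * a i = 1 := by
  simp_rw [div_mul_eq_mul_div, ← sq, ← Finset.sum_div, hS, div_self hS0]

theorem sum_sq_eq_sum_sq_div_add_sum_sq_sub (hS : ∑ i ∈ s, a i ^ 2 = S) (hS0 : S ≠ 0)
    (hc : ∑ i ∈ s, c i * a i = 1) :
    ∑ i ∈ s, c i ^ 2 = ∑ i ∈ s, (a i / S) ^ 2 + ∑ i ∈ s, (c i - a i / S) ^ 2 := by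
  have hsq : ∑ i ∈ s, (a i / S) ^ 2 = S⁻¹ := by
    simp_rw [div_pow, ← Finset.sum_div, hS]
    field_simp
  have hcross : ∑ i ∈ s, c i * (a i / S) = S⁻¹ := by
    simp_rw [mul_div_assoc', ← Finset.sum_div, hc, one_div]
  simp_rw [sub_sq, Finset.sum_add_distrib, Finset.sum_sub_distrib, mul_assoc, ← Finset.mul_sum,
    hsq, hcross]
  ring

theorem sum_sq_div_le_sum_sq (hS : ∑ i ∈ s, a i ^ 2 = S) (hS0 : S ≠ 0)
    (hc : ∑ i ∈ s, c i * a i = 1) : ∑ i ∈ s, (a i / S) ^ 2 ≤ ∑ i ∈ s, c i ^ 2 := by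
  rw [sum_sq_eq_sum_sq_div_add_sum_sq_sub hS hS0 hc]
  exact le_add_of_nonneg_right (Finset.sum_nonneg fun i _ => sq_nonneg _)

theorem eq_div_of_sum_sq_le (hS : ∑ i ∈ s, a i ^ 2 = S) (hS0 : S ≠ 0)
    (hc : ∑ i ∈ s, c i * a i = 1) (hle : ∑ i ∈ s, c i ^ 2 ≤ ∑ i ∈ s, (a i / S) ^ 2) :
    ∀ i ∈ s, c i = a i / S := by
  rw [sum_sq_eq_sum_sq_div_add_sum_sq_sub hS hS0 hc, add_le_iff_nonpos_right] at hle
  have hzero := (Finset.sum_eq_zero_iff_of_nonneg fun i _ => sq_nonneg (c i - a i / S)).1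
    (le_antisymm hle (Finset.sum_nonneg fun i _ => sq_nonneg _))
  exact fun i hi => sub_eq_zero.1 (pow_eq_zero_iff two_ne_zero |>.1 (hzero i hi))

end ConstrainedLeastSquares

theorem degree_ThatP (j : ℕ) : (ThatP j).degree = j := by
  unfold ThatP
  split_ifs <;> rw [degree_C_mul (by positivity), degree_T] <;> simp

noncomputable def ThatPSequence : Polynomial.Sequence ℝ where
  elems' := ThatP
  degree_eq' := degree_ThatP

theorem natDegree_le_iff_exists_sum_smul_ThatP (p : ℝ[X]) (k : ℕ) :
    p.natDegree ≤ k ↔ ∃ c : ℕ → ℝ, ∑ j ∈ range (k + 1), c j • ThatP j = p := by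
  have hIic : Set.Iic k = ↑(range (k + 1)) := by ext; simp
  rw [natDegree_le_iff_degree_le, ← mem_degreeLE,
    ← ThatPSequence.span_degreeLE fun i _ =>
      (leadingCoeff_ne_zero.2 (ThatPSequence.ne_zero i)).isUnit, hIic,
    Submodule.mem_span_image_finset_iff_exists_fun']
  rfl

theorem integral_C_mul_T_mul_C_mul_T (a b : ℝ) (m n : ℤ) :
    ∫ x, (C a * T ℝ m).eval x * (C b * T ℝ n).eval x ∂measureT =
      a * b * ∫ x, (T ℝ m).eval x * (T ℝ n).eval x ∂measureT := by
  rw [← integral_const_mul]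
  congr 1 with x
  simp only [eval_mul, eval_C]
  ring

theorem integral_ThatP_mul_ThatP (i j : ℕ) :
    ∫ x, (ThatP i).eval x * (ThatP j).eval x ∂measureT = if i = j then 1 else 0 := by
  rcases eq_or_ne i j with rfl | h
  · rcases eq_or_ne i 0 with rfl | hi
    · simp only [ThatP, if_true, integral_C_mul_T_mul_C_mul_T, Nat.cast_zero,
        integral_eval_T_real_mul_self_measureT_zero]
      field_simp
      exact (sq_sqrt pi_pos.le).symm
    · simp only [ThatP, if_neg hi, if_true, integral_C_mul_T_mul_C_mul_T,
        integral_T_real_mul_self_measureT_of_ne_zero hi]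
      field_simp
      rw [sq_sqrt (by positivity)]
      ring
  · unfold ThatP
    split_ifs <;> simp only [integral_C_mul_T_mul_C_mul_T,
      integral_eval_T_real_mul_eval_T_real_measureT_of_ne h, mul_zero]

theorem chebNorm_eq_sqrt_integral_measureT (p : ℝ[X]) :
    chebNorm p = √(∫ x, p.eval x ^ 2 ∂measureT) := by
  simp_rw [chebNorm, integral_measureT, div_eq_mul_inv, sqrt_inv]

theorem chebNorm_sum_smul_ThatP (s : Finset ℕ) (c : ℕ → ℝ) :
    chebNorm (∑ j ∈ s, c j • ThatP j) = √(∑ j ∈ s, c j ^ 2) := by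
  rw [chebNorm_eq_sqrt_integral_measureT, ← integral_sum_mul_sq_of_orthonormal
    (fun i j => integrable_measureT (by fun_prop)) integral_ThatP_mul_ThatP]
  simp [eval_finsetSum]

theorem rhoHat_eq_sum_smul (k : ℕ) (γ : ℝ) :
    rhoHat k γ = ∑ j ∈ range (k + 1),
      ((ThatP j).eval γ / ∑ i ∈ range (k + 1), (ThatP i).eval γ ^ 2) • ThatP j := by
  simp only [rhoHat, Finset.mul_sum, C_mul', smul_smul, div_eq_inv_mul]

theorem sum_sq_eval_ThatP_pos (k : ℕ) (γ : ℝ) : 0 < ∑ j ∈ range (k + 1), (ThatP j).eval γ ^ 2 :=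
  Finset.sum_pos' (fun j _ => sq_nonneg _) ⟨0, by simp, by simp [ThatP, pi_pos]⟩

theorem kernel_polynomial_is_unique_minimizer_general (k : ℕ) (γ : ℝ) :
    (rhoHat k γ).natDegree ≤ k ∧ (rhoHat k γ).eval γ = 1 ∧
    (∀ r : Polynomial ℝ, r.natDegree ≤ k → r.eval γ = 1 →
      chebNorm (rhoHat k γ) ≤ chebNorm r) ∧
    (∀ r : Polynomial ℝ, r.natDegree ≤ k → r.eval γ = 1 →
      (∀ s : Polynomial ℝ, s.natDegree ≤ k → s.eval γ = 1 → chebNorm r ≤ chebNorm s) →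
      r = rhoHat k γ) := by
  set a : ℕ → ℝ := fun j => (ThatP j).eval γ
  set S := ∑ j ∈ range (k + 1), a j ^ 2 with hS
  have hS0 : S ≠ 0 := (sum_sq_eval_ThatP_pos k γ).ne'
  have eval_sum (c : ℕ → ℝ) :
      (∑ j ∈ range (k + 1), c j • ThatP j).eval γ = ∑ j ∈ range (k + 1), c j * a j := by
    simp [eval_finsetSum, a]
  have hρ : rhoHat k γ = ∑ j ∈ range (k + 1), (a j / S) • ThatP j := rhoHat_eq_sum_smul k γ
  have hρdeg : (rhoHat k γ).natDegree ≤ k :=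
    (natDegree_le_iff_exists_sum_smul_ThatP _ k).2 ⟨_, hρ.symm⟩
  have hργ : (rhoHat k γ).eval γ = 1 := by
    rw [hρ, eval_sum, sum_div_mul_self_eq_one hS.symm hS0]
  refine ⟨hρdeg, hργ, fun r hr hrγ => ?_, fun r hr hrγ hmin => ?_⟩
  · obtain ⟨c, rfl⟩ := (natDegree_le_iff_exists_sum_smul_ThatP r k).1 hr
    rw [hρ, chebNorm_sum_smul_ThatP, chebNorm_sum_smul_ThatP]
    exact sqrt_le_sqrt (sum_sq_div_le_sum_sq hS.symm hS0 (eval_sum c ▸ hrγ))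
  · obtain ⟨c, rfl⟩ := (natDegree_le_iff_exists_sum_smul_ThatP r k).1 hr
    have hle := hmin _ hρdeg hργ
    rw [hρ, chebNorm_sum_smul_ThatP, chebNorm_sum_smul_ThatP,
      sqrt_le_sqrt_iff (Finset.sum_nonneg fun j _ => sq_nonneg _)] at hle
    rw [hρ]
    exact Finset.sum_congr rfl fun j hj => by
      rw [eq_div_of_sum_sq_le hS.symm hS0 (eval_sum c ▸ hrγ) hle j hj]

/-- The kernel polynomial `ρ̂_k` is the unique polynomial of degree at most `k` with
`ρ̂_k(γ) = 1` minimizing the Chebyshev `L²`-norm over polynomials `r` of degree `≤ k`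
with `r(γ) = 1`. -/
theorem kernel_polynomial_is_unique_minimizer (k : ℕ) (γ : ℝ) (hγ : γ ∈ Set.Ioo (-1:ℝ) 1) :
    (rhoHat k γ).natDegree ≤ k ∧ (rhoHat k γ).eval γ = 1 ∧
    (∀ r : Polynomial ℝ, r.natDegree ≤ k → r.eval γ = 1 →
      chebNorm (rhoHat k γ) ≤ chebNorm r) ∧
    (∀ r : Polynomial ℝ, r.natDegree ≤ k → r.eval γ = 1 →
      (∀ s : Polynomial ℝ, s.natDegree ≤ k → s.eval γ = 1 → chebNorm r ≤ chebNorm s) →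
      r = rhoHat k γ) :=
  kernel_polynomial_is_unique_minimizer_general k γ
end

section
/- Let ρ̂_k be the kernel polynomial of degree k centered at γ ∈ (−1,1) (so ρ̂_k(γ)=1 and ρ̂_k minimizes the Chebyshev L²-norm among degree-≤k polynomials equal to 1 at γ). Fix a point ξ ∈ (−1,1) with ξ ≠ γ. Then it is not the case that |ρ̂_k(ξ)| ≥ ε for some fixed ε > 0 and all sufficiently large k; i.e., lim inf_{k→∞} |ρ̂_k(ξ)| = 0. -/
open Real Polynomial Finset

/-!
Write `γ = cos θ`, `ξ = cos φ` and `K_k(x, y) = ∑_{j ≤ k} T̂ⱼ(x) T̂ⱼ(y)`, so that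
`ρ̂_k(ξ) = K_k(γ, ξ) / K_k(γ, γ)`. The product-to-sum formula gives
`π K_k(γ, ξ) = 1 + ∑_{j=1}^k (cos j(θ - φ) + cos j(θ + φ))`. Both cosine sums are
Dirichlet sums, bounded by `1 / |sin ((θ ∓ φ) / 2)|`, and these sines are nonzero because
their product is `(cos φ - cos θ) / 2`. On the diagonal the first sum is `k`, so
`π K_k(γ, γ) ≥ k + 1 - 1 / |sin θ|`. Hence `ρ̂_k(ξ) = O(1 / k)` tends to `0`.
-/

open Filter Topology

theorem abs_sum_range_cos_le {θ : ℝ} (h : sin (θ / 2) ≠ 0) (n : ℕ) (b : ℝ) :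
    |∑ i ∈ range n, cos (θ * i + b)| ≤ |sin (θ / 2)|⁻¹ := by
  have key := congrArg abs (sin_mul_sum_cos n θ b)
  rw [abs_mul, abs_mul] at key
  rw [← one_div, le_div_iff₀' (abs_pos.2 h), key]
  exact mul_le_one₀ (abs_sin_le_one _) (abs_nonneg _) (abs_cos_le_one _)

theorem pi_mul_ThatP_eval_cos_mul (j : ℕ) (θ φ : ℝ) :
    π * ((ThatP j).eval (cos θ) * (ThatP j).eval (cos φ)) =
      if j = 0 then 1 else cos ((θ - φ) * j) + cos ((θ + φ) * j) := by
  rcases eq_or_ne j 0 with rfl | hj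
  · simp [ThatP, ← mul_inv, pi_pos.le, pi_ne_zero]
  · simp only [ThatP, hj, if_false, eval_mul, eval_C, Chebyshev.T_real_cos, Int.cast_natCast]
    rw [sub_mul, add_mul, cos_sub, cos_add]
    field_simp
    rw [sq_sqrt (by positivity)]
    ring

noncomputable def chebyshevKernel (k : ℕ) (x y : ℝ) : ℝ :=
  ∑ j ∈ range (k + 1), (ThatP j).eval x * (ThatP j).eval y

theorem rhoHat_eval (k : ℕ) (γ x : ℝ) :
    (rhoHat k γ).eval x = chebyshevKernel k γ x / chebyshevKernel k γ γ := by
  simp [rhoHat, chebyshevKernel, eval_finsetSum, sq, div_eq_inv_mul]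

theorem pi_mul_chebyshevKernel_cos (k : ℕ) (θ φ : ℝ) :
    π * chebyshevKernel k (cos θ) (cos φ) =
      1 + ∑ i ∈ range k, (cos ((θ - φ) * (i + 1)) + cos ((θ + φ) * (i + 1))) := by
  rw [chebyshevKernel, mul_sum, sum_range_succ']
  simp only [pi_mul_ThatP_eval_cos_mul]
  push_cast
  simp [add_comm]

theorem abs_pi_mul_chebyshevKernel_cos_le {θ φ : ℝ} (hsub : sin ((θ - φ) / 2) ≠ 0)
    (hadd : sin ((θ + φ) / 2) ≠ 0) (k : ℕ) :
    |π * chebyshevKernel k (cos θ) (cos φ)| ≤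
      1 + |sin ((θ - φ) / 2)|⁻¹ + |sin ((θ + φ) / 2)|⁻¹ := by
  rw [pi_mul_chebyshevKernel_cos, sum_add_distrib, ← add_assoc]
  simp only [mul_add_one]
  calc _ ≤ |1| + |∑ i ∈ range k, cos ((θ - φ) * i + (θ - φ))|
          + |∑ i ∈ range k, cos ((θ + φ) * i + (θ + φ))| := abs_add_three _ _ _
    _ ≤ _ := by
      rw [abs_one]
      gcongr
      exacts [abs_sum_range_cos_le hsub k _, abs_sum_range_cos_le hadd k _]

theorem pi_mul_chebyshevKernel_cos_self_ge {θ : ℝ} (h : sin θ ≠ 0) (k : ℕ) :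
    k + (1 - |sin θ|⁻¹) ≤ π * chebyshevKernel k (cos θ) (cos θ) := by
  have hsum := abs_sum_range_cos_le (θ := θ + θ) (by rwa [add_self_div_two]) k (θ + θ)
  rw [add_self_div_two] at hsum
  rw [pi_mul_chebyshevKernel_cos, sum_add_distrib]
  simp only [sub_self, zero_mul, mul_add_one, add_zero, cos_zero, sum_const, card_range,
    nsmul_one]
  linarith [(abs_le.1 hsum).1]

theorem tendsto_pi_mul_chebyshevKernel_cos_self {θ : ℝ} (h : sin θ ≠ 0) :
    Tendsto (fun k => π * chebyshevKernel k (cos θ) (cos θ)) atTop atTop :=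
  tendsto_atTop_mono (pi_mul_chebyshevKernel_cos_self_ge h) <|
    tendsto_atTop_add_const_right _ _ tendsto_natCast_atTop_atTop

theorem tendsto_rhoHat_eval_cos {θ φ : ℝ} (hθ : sin θ ≠ 0) (hne : cos φ ≠ cos θ) :
    Tendsto (fun k => (rhoHat k (cos θ)).eval (cos φ)) atTop (𝓝 0) := by
  have hprod : -2 * sin ((θ + φ) / 2) * sin ((θ - φ) / 2) ≠ 0 :=
    cos_sub_cos θ φ ▸ sub_ne_zero.2 hne.symm
  have hsub := right_ne_zero_of_mul hprod
  have hadd := right_ne_zero_of_mul (left_ne_zero_of_mul hprod)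
  have hbdd : IsBoundedUnder (· ≤ ·) atTop
      (norm ∘ fun k => π * chebyshevKernel k (cos θ) (cos φ)) :=
    isBoundedUnder_of ⟨_, abs_pi_mul_chebyshevKernel_cos_le hsub hadd⟩
  refine ((tendsto_pi_mul_chebyshevKernel_cos_self hθ).inv_tendsto_atTop
    |>.zero_mul_isBoundedUnder_le hbdd).congr fun k => ?_
  rw [rhoHat_eval, Pi.inv_apply]
  field_simp

theorem tendsto_rhoHat_eval {γ ξ : ℝ} (hγ : γ ∈ Set.Ioo (-1) 1)
    (hξ : ξ ∈ Set.Icc (-1) 1) (hne : ξ ≠ γ) :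
    Tendsto (fun k => (rhoHat k γ).eval ξ) atTop (𝓝 0) := by
  have hsin : sin (arccos γ) ≠ 0 := by
    rw [sin_arccos]
    exact sqrt_ne_zero'.2 (by nlinarith [hγ.1, hγ.2])
  have hcosγ := cos_arccos hγ.1.le hγ.2.le
  have hcosξ := cos_arccos hξ.1 hξ.2
  simpa [hcosγ, hcosξ] using
    tendsto_rhoHat_eval_cos (φ := arccos ξ) hsin (by rwa [hcosγ, hcosξ])

/-- At a fixed point `ξ ≠ γ` in `(−1,1)`, the values `|ρ̂_k(ξ)|` of the kernel
polynomials cannot stay bounded away from zero for all large `k`: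
`liminf_{k→∞} |ρ̂_k(ξ)| = 0`. -/
theorem kernel_polynomial_liminf_zero (γ ξ : ℝ)
    (hγ : γ ∈ Set.Ioo (-1:ℝ) 1) (hξ : ξ ∈ Set.Ioo (-1:ℝ) 1) (hne : ξ ≠ γ) :
    (¬ ∃ ε > 0, ∃ N : ℕ, ∀ k ≥ N, ε ≤ |(rhoHat k γ).eval ξ|)
    ∧ Filter.liminf (fun k : ℕ => |(rhoHat k γ).eval ξ|) Filter.atTop = 0 := by
  have h := (tendsto_rhoHat_eval hγ (Set.Ioo_subset_Icc_self hξ) hne).abs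
  rw [abs_zero] at h
  refine ⟨fun ⟨ε, hε, N, hN⟩ => ?_, h.liminf_eq⟩
  obtain ⟨k, hk, hkN⟩ := ((h.eventually (gt_mem_nhds hε)).and (eventually_ge_atTop N)).exists
  exact (hN k hkN).not_gt hk
end
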